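/- Let n ≥ 2 and τ ∈ [0,1]. For α, β ∈ ℂⁿ define {M}_τ = M − ((1−τ)/n)tr(M)·Id. Then ⟨β, {βα*}_τ α⟩ is real and nonnegative; moreover if τ > 1 − n then ⟨β, {βα*}_τ α⟩ = 0 implies α = 0 or β = 0. -/

import Mathlib

open Matrix
open scoped ComplexOrder

/-- `{M}_τ = M - ((1-τ)/n)·tr(M)·Id`. -/
noncomputable def brace {n : ℕ} (τ : ℝ) (M : Matrix (Fin n) (Fin n) ℂ) :
    Matrix (Fin n) (Fin n) ℂ :=
  M - (((1 - τ : ℂ) / n) * M.trace) • 1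

/-- The rank-one matrix `β α*` with entries `βᵢ · conj αⱼ`. -/
noncomputable def op {n : ℕ} (β α : Fin n → ℂ) : Matrix (Fin n) (Fin n) ℂ :=
  vecMulVec β (star α)

/-- The key algebraic identity. -/
theorem brace_op_identity (n : ℕ) (τ : ℝ) (α β : Fin n → ℂ) :
    star β ⬝ᵥ ((brace τ (op β α)).mulVec α)
    = (star α ⬝ᵥ α) * (star β ⬝ᵥ β) - ((1-τ:ℂ)/n) * ((star α ⬝ᵥ β) * (star β ⬝ᵥ α)) := by
  have h1 : (op β α).mulVec α = (star α ⬝ᵥ α) • β := by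
    funext i
    simp only [op, vecMulVec, mulVec, dotProduct, Pi.smul_apply, smul_eq_mul,
      Pi.star_apply, of_apply]
    rw [Finset.sum_mul]
    exact Finset.sum_congr rfl fun _ _ => by ring
  have h2 : (op β α).trace = star α ⬝ᵥ β := by
    simp [op, trace, diag, vecMulVec, dotProduct, mul_comm]
  rw [brace, sub_mulVec, smul_mulVec, one_mulVec, dotProduct_sub, h1, h2,
    dotProduct_smul, dotProduct_smul, smul_eq_mul, smul_eq_mul]
  ring

/-- for `n ≥ 2`, `τ ∈ [0,1]`, the quantity `⟨β, {βα*}_τ α⟩` is real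
and nonnegative (expressed via the complex order `0 ≤ ·`); moreover if
`τ > 1 − n` and it vanishes, then `α = 0` or `β = 0`. -/
theorem stmt_16 (n : ℕ) (hn : 2 ≤ n) (τ : ℝ) (hτ0 : 0 ≤ τ) (hτ1 : τ ≤ 1)
    (α β : Fin n → ℂ) :
    0 ≤ star β ⬝ᵥ ((brace τ (op β α)).mulVec α) ∧
    ((1 - (n : ℝ) < τ) → star β ⬝ᵥ ((brace τ (op β α)).mulVec α) = 0 →
      α = 0 ∨ β = 0) := by
  -- work in EuclideanSpace
  set α' : EuclideanSpace ℂ (Fin n) := WithLp.toLp 2 α with hα'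
  set β' : EuclideanSpace ℂ (Fin n) := WithLp.toLp 2 β with hβ'
  set s : ℂ := star β ⬝ᵥ α with hs
  have hinner : (inner ℂ β' α' : ℂ) = s := by
    rw [EuclideanSpace.inner_eq_star_dotProduct]; exact dotProduct_comm _ _
  have hA : (star α ⬝ᵥ α : ℂ) = ((‖α'‖^2 : ℝ) : ℂ) := by
    have : (inner ℂ α' α' : ℂ) = star α ⬝ᵥ α := by
      rw [EuclideanSpace.inner_eq_star_dotProduct]; exact dotProduct_comm _ _
    rw [← this, inner_self_eq_norm_sq_to_K]
    norm_cast
  have hB : (star β ⬝ᵥ β : ℂ) = ((‖β'‖^2 : ℝ) : ℂ) := by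
    have : (inner ℂ β' β' : ℂ) = star β ⬝ᵥ β := by
      rw [EuclideanSpace.inner_eq_star_dotProduct]; exact dotProduct_comm _ _
    rw [← this, inner_self_eq_norm_sq_to_K]
    norm_cast
  have hsconj : (star α ⬝ᵥ β : ℂ) = star s := (star_dotProduct _ _)
  have hS : (star α ⬝ᵥ β : ℂ) * (star β ⬝ᵥ α) = ((‖s‖^2 : ℝ) : ℂ) := by
    rw [hsconj, ← hs]
    have : (star s) * s = ((Complex.normSq s : ℝ) : ℂ) := by
      rw [mul_comm]
      exact Complex.mul_conj s
    rw [this, Complex.normSq_eq_norm_sq]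
  have key : star β ⬝ᵥ ((brace τ (op β α)).mulVec α)
      = (((‖α'‖^2 * ‖β'‖^2 - ((1-τ)/n) * ‖s‖^2 : ℝ)) : ℂ) := by
    rw [brace_op_identity, hA, hB, hS]
    push_cast
    ring
  -- real-number facts
  have hcs : ‖s‖ ≤ ‖β'‖ * ‖α'‖ := by
    rw [← hinner]; exact norm_inner_le_norm β' α'
  have hn' : (2:ℝ) ≤ (n:ℝ) := by exact_mod_cast hn
  have hc0 : 0 ≤ (1-τ)/(n:ℝ) := div_nonneg (by linarith) (by linarith)
  have hc1 : (1-τ)/(n:ℝ) < 1 := by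
    rw [div_lt_one (by linarith : (0:ℝ) < n)]; linarith
  have hs0 : 0 ≤ ‖s‖ := norm_nonneg _
  have ha0 : 0 ≤ ‖α'‖ := norm_nonneg _
  have hb0 : 0 ≤ ‖β'‖ := norm_nonneg _
  obtain ⟨a, ha⟩ : ∃ a, ‖α'‖ = a := ⟨_, rfl⟩
  obtain ⟨b, hb⟩ : ∃ b, ‖β'‖ = b := ⟨_, rfl⟩
  obtain ⟨t, ht⟩ : ∃ t, ‖s‖ = t := ⟨_, rfl⟩
  rw [ht, hb, ha] at hcs
  rw [ht] at hs0
  rw [ha] at ha0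
  rw [hb] at hb0
  rw [ha, hb, ht] at key
  have hcs2 : t^2 ≤ a^2 * b^2 := by nlinarith
  have hreal : 0 ≤ a^2 * b^2 - ((1-τ)/(n:ℝ)) * t^2 := by nlinarith
  constructor
  · rw [key]
    exact_mod_cast hreal
  · intro _ hzero
    rw [key] at hzero
    have hz : a^2 * b^2 - ((1-τ)/(n:ℝ)) * t^2 = 0 := by exact_mod_cast hzero
    have hab : a^2 * b^2 = 0 := by
      clear hzero key hinner hA hB hS hsconj ht hs hb ha hα' hβ'
      clear_value s α' β'
      clear s α' β' α β
      nlinarith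
    rcases mul_eq_zero.mp hab with h | h
    · left
      have h' : ‖α'‖ = 0 := by rw [ha]; exact sq_eq_zero_iff.mp h
      exact (WithLp.toLp_eq_zero 2).mp (norm_eq_zero (E := EuclideanSpace ℂ (Fin n)) |>.mp h')
    · right
      have h' : ‖β'‖ = 0 := by rw [hb]; exact sq_eq_zero_iff.mp h
      exact (WithLp.toLp_eq_zero 2).mp (norm_eq_zero (E := EuclideanSpace ℂ (Fin n)) |>.mp h')
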